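/- Let ψ(t) = (1/√(2π)) ∫_t^∞ e^{−u²/2} du. For any γ ∈ (0,1] there is a constant C (depending only on γ) such that for every f in C^{0,γ}_ω(X × ℝ) with fiberwise limits p^−(f), p^+(f) at ∓∞, the function φ(x,t) = f(x,t) − p^−(f)(x)ψ(t) − p^+(f)(x)(1−ψ(t)) satisfies sup_{x,t} e^{γ|t|}|φ(x,t)| ≤ C‖f‖_{γ,ω} and, for x, x' in the same fiber, e^{γ|t|}|φ(x,t) − φ(x',t)| ≤ C‖f‖_{γ,ω} d(x,x')^γ. -/

import Mathlib

noncomputable section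

open Filter MeasureTheory

/-- `ψ(t) = (1/√(2π)) ∫_t^∞ e^{-u²/2} du`. -/
def psi (t : ℝ) : ℝ :=
  (Real.sqrt (2 * Real.pi))⁻¹ * ∫ u in Set.Ioi t, Real.exp (-u ^ 2 / 2)

/-- The conical modulus
`ω((x,t),(x',t')) = e^{-(|t|+|t'|)/2} √(d(x,x')² + (e^{(t-t')/2} - e^{(t'-t)/2})²)`. -/
def omegaMod {X : Type*} [MetricSpace X] (x : X) (t : ℝ) (x' : X) (t' : ℝ) : ℝ :=
  Real.exp (-((|t| + |t'|) / 2)) *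
    Real.sqrt (dist x x' ^ 2 + (Real.exp ((t - t') / 2) - Real.exp ((t' - t) / 2)) ^ 2)

/-!
Along a fiber, the `ω`-Hölder bound between `t` and `t' → ±∞` gives
`|f(x,t) - p^±(f)(x)| ≤ B e^{-γ|t|}` on the corresponding half-line, hence `|p⁺ - p⁻| ≤ 2B`.
Since `ψ(t) ≤ e^{-t}` and `1 - ψ(t) = ψ(-t)`, writing `φ = (f - p⁺) + (p⁺ - p⁻)ψ` for `t ≥ 0`
(and symmetrically for `t ≤ 0`) bounds `e^{γ|t|}|φ|` by `3B`. At equal times the modulus is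
`e^{-|t|} d(x,x')`, which gives the second estimate directly.
-/

open Real Set

section Psi

lemma integrable_exp_neg_sq_div_two : Integrable (fun u : ℝ => exp (-u ^ 2 / 2)) := by
  convert integrable_exp_neg_mul_sq (show (0 : ℝ) < 1 / 2 by norm_num) using 2 with u
  ring_nf

lemma integral_exp_neg_sq_div_two : ∫ u : ℝ, exp (-u ^ 2 / 2) = √(2 * π) := by
  have h := integral_gaussian (1 / 2)
  rw [show π / (1 / 2) = 2 * π by ring] at h
  rw [← h]
  congr 1 with u
  ring_nf

lemma psi_nonneg (t : ℝ) : 0 ≤ psi t :=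
  mul_nonneg (by positivity) (setIntegral_nonneg measurableSet_Ioi fun _ _ => (exp_pos _).le)

lemma psi_neg (t : ℝ) : psi (-t) = 1 - psi t := by
  have hsplit : (∫ u in Iic t, exp (-u ^ 2 / 2)) + ∫ u in Ioi t, exp (-u ^ 2 / 2) = √(2 * π) := by
    rw [← integral_exp_neg_sq_div_two]
    exact intervalIntegral.integral_Iic_add_Ioi integrable_exp_neg_sq_div_two.integrableOn
      integrable_exp_neg_sq_div_two.integrableOn
  have hreflect : (∫ u in Ioi (-t), exp (-u ^ 2 / 2)) = ∫ u in Iic t, exp (-u ^ 2 / 2) := by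
    simp [← integral_comp_neg_Iic]
  have hpos : 0 < √(2 * π) := by positivity
  rw [psi, psi, hreflect, eq_sub_iff_add_eq, ← mul_add, hsplit, inv_mul_cancel₀ hpos.ne']

lemma exp_half_le_sqrt_two_pi : exp (1 / 2) ≤ √(2 * π) := by
  rw [le_sqrt (exp_pos _).le (by positivity), ← exp_nat_mul,
    show ((2 : ℕ) : ℝ) * (1 / 2) = 1 by norm_num]
  linarith [exp_one_lt_d9, pi_gt_three]

lemma psi_le_exp_neg (t : ℝ) : psi t ≤ exp (-t) := by
  -- `-u²/2 ≤ 1/2 - u`, and `e^{1/2} ≤ √(2π)` absorbs the constant.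
  have htail : (∫ u in Ioi t, exp (-u ^ 2 / 2)) ≤ exp (1 / 2) * exp (-t) := by
    rw [← integral_exp_neg_Ioi, ← integral_const_mul]
    refine setIntegral_mono_on integrable_exp_neg_sq_div_two.integrableOn
      (((exp_neg_integrableOn_Ioi t one_pos).congr_fun (fun u _ => by simp)
        measurableSet_Ioi).const_mul _) measurableSet_Ioi fun u _ => ?_
    rw [← exp_add]
    exact exp_le_exp.2 (by nlinarith [sq_nonneg (u - 1)])
  have hpos : 0 < √(2 * π) := by positivity
  rw [psi, inv_mul_le_iff₀ hpos]
  exact htail.trans (mul_le_mul_of_nonneg_right exp_half_le_sqrt_two_pi (exp_pos _).le)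

end Psi

section Modulus

variable {X : Type*} [MetricSpace X]

lemma omegaMod_neg_neg (x : X) (t : ℝ) (x' : X) (t' : ℝ) :
    omegaMod x (-t) x' (-t') = omegaMod x t x' t' := by
  simp only [omegaMod, abs_neg, neg_sub_neg]
  congr 3
  ring

lemma omegaMod_self_le (x : X) (t t' : ℝ) :
    omegaMod x t x t' ≤ exp ((|t - t'| - |t| - |t'|) / 2) := by
  have hsinh : |exp ((t - t') / 2) - exp ((t' - t) / 2)| ≤ exp (|t - t'| / 2) := by
    refine abs_sub_le_of_nonneg_of_le (exp_pos _).le ?_ (exp_pos _).le ?_ <;>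
      refine exp_le_exp.2 (div_le_div_of_nonneg_right ?_ zero_le_two)
    · exact le_abs_self _
    · exact abs_sub_comm t t' ▸ le_abs_self _
  calc omegaMod x t x t'
      = exp (-((|t| + |t'|) / 2)) * |exp ((t - t') / 2) - exp ((t' - t) / 2)| := by
        simp [omegaMod, sqrt_sq_eq_abs]
    _ ≤ exp (-((|t| + |t'|) / 2)) * exp (|t - t'| / 2) := by gcongr
    _ = exp ((|t - t'| - |t| - |t'|) / 2) := by rw [← exp_add]; ring_nf

lemma omegaMod_same_time (x x' : X) (t : ℝ) :
    omegaMod x t x' t = exp (-|t|) * dist x x' := by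
  simp [omegaMod, sqrt_sq dist_nonneg]

variable {E : Type*} [NormedAddCommGroup E] {g : ℝ → E} {L : E} {B γ : ℝ}

lemma norm_sub_le_of_tendsto_atTop (x : X) (hB : 0 ≤ B) (hγ : 0 ≤ γ)
    (hg : ∀ t t', ‖g t - g t'‖ ≤ B * omegaMod x t x t' ^ γ) (hL : Tendsto g atTop (nhds L))
    {t : ℝ} (ht : 0 ≤ t) : ‖g t - L‖ ≤ B * exp (-(γ * t)) := by
  refine le_of_tendsto (tendsto_const_nhds.sub hL).norm ?_
  filter_upwards [eventually_ge_atTop t] with t' htt'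
  have hω : omegaMod x t x t' ≤ exp (-t) := by
    refine (omegaMod_self_le x t t').trans (exp_le_exp.2 (le_of_eq ?_))
    rw [abs_sub_comm, abs_of_nonneg (sub_nonneg.2 htt'), abs_of_nonneg ht,
      abs_of_nonneg (ht.trans htt')]
    ring
  calc ‖g t - g t'‖ ≤ B * omegaMod x t x t' ^ γ := hg t t'
    _ ≤ B * exp (-t) ^ γ := by
      gcongr
      exact mul_nonneg (exp_pos _).le (sqrt_nonneg _)
    _ = B * exp (-(γ * t)) := by rw [← exp_mul]; ring_nf

lemma norm_sub_le_of_tendsto_atBot (x : X) (hB : 0 ≤ B) (hγ : 0 ≤ γ)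
    (hg : ∀ t t', ‖g t - g t'‖ ≤ B * omegaMod x t x t' ^ γ) (hL : Tendsto g atBot (nhds L))
    {t : ℝ} (ht : t ≤ 0) : ‖g t - L‖ ≤ B * exp (γ * t) := by
  simpa using norm_sub_le_of_tendsto_atTop (g := fun s => g (-s)) x hB hγ
    (fun s s' => omegaMod_neg_neg x s x s' ▸ hg (-s) (-s'))
    (hL.comp tendsto_neg_atTop_atBot) (neg_nonneg.2 ht)

end Modulus

lemma exp_mul_norm_sub_interp_le_of_nonneg {z a b : ℂ} {B γ t : ℝ} (hγ : γ ≤ 1) (hB : 0 ≤ B)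
    (ht : 0 ≤ t) (hz : ‖z - b‖ ≤ B * exp (-(γ * t))) (hab : ‖b - a‖ ≤ 2 * B) :
    exp (γ * t) * ‖z - a * (psi t : ℂ) - b * (1 - (psi t : ℂ))‖ ≤ 3 * B := by
  have hψ : ‖(psi t : ℂ)‖ ≤ exp (-(γ * t)) := by
    rw [Complex.norm_real, Real.norm_of_nonneg (psi_nonneg t)]
    exact (psi_le_exp_neg t).trans (exp_le_exp.2 (by nlinarith))
  have hφ : ‖z - a * (psi t : ℂ) - b * (1 - (psi t : ℂ))‖ ≤ 3 * B * exp (-(γ * t)) :=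
    calc ‖z - a * (psi t : ℂ) - b * (1 - (psi t : ℂ))‖
        = ‖(z - b) + (b - a) * (psi t : ℂ)‖ := by ring_nf
      _ ≤ ‖z - b‖ + ‖b - a‖ * ‖(psi t : ℂ)‖ := (norm_add_le _ _).trans_eq (by rw [norm_mul])
      _ ≤ B * exp (-(γ * t)) + 2 * B * exp (-(γ * t)) := by gcongr
      _ = 3 * B * exp (-(γ * t)) := by ring
  calc exp (γ * t) * ‖z - a * (psi t : ℂ) - b * (1 - (psi t : ℂ))‖
      ≤ exp (γ * t) * (3 * B * exp (-(γ * t))) := by gcongr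
    _ = 3 * B := by rw [exp_neg]; field_simp

lemma exp_mul_norm_sub_interp_le {X : Type*} [MetricSpace X] {g : ℝ → ℂ} {a b : ℂ} {B γ : ℝ}
    (x : X) (hγ : γ ∈ Ioc (0 : ℝ) 1) (hB : 0 ≤ B)
    (hg : ∀ t t', ‖g t - g t'‖ ≤ B * omegaMod x t x t' ^ γ)
    (ha : Tendsto g atBot (nhds a)) (hb : Tendsto g atTop (nhds b)) (t : ℝ) :
    exp (γ * |t|) * ‖g t - a * (psi t : ℂ) - b * (1 - (psi t : ℂ))‖ ≤ 3 * B := by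
  have hga := fun {t} => norm_sub_le_of_tendsto_atBot x hB hγ.1.le hg ha (t := t)
  have hgb := fun {t} => norm_sub_le_of_tendsto_atTop x hB hγ.1.le hg hb (t := t)
  have hab : ‖b - a‖ ≤ 2 * B := by
    have h0a := hga le_rfl
    have h0b := hgb le_rfl
    simp only [mul_zero, neg_zero, exp_zero, mul_one] at h0a h0b
    have := norm_sub_le_norm_sub_add_norm_sub b (g 0) a
    rw [norm_sub_rev b (g 0)] at this
    linarith
  rcases le_total 0 t with ht | ht
  · rw [abs_of_nonneg ht]
    exact exp_mul_norm_sub_interp_le_of_nonneg hγ.2 hB ht (hgb ht) hab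
  · -- reflect `t ↦ -t`, exchanging the roles of `a` and `b`
    have := exp_mul_norm_sub_interp_le_of_nonneg hγ.2 hB (neg_nonneg.2 ht)
      (by rw [mul_neg, neg_neg]; exact hga ht) (norm_sub_rev a b ▸ hab)
    rw [psi_neg] at this
    rw [abs_of_nonpos ht]
    convert this using 3
    push_cast
    ring

theorem stmt18_general {X : Type*} [MetricSpace X] {A : Type*} (πA : X → A)
    (γ : ℝ) (hγ : γ ∈ Set.Ioc (0 : ℝ) 1) :
    ∃ C : ℝ, 0 < C ∧
      ∀ (f : X → ℝ → ℂ) (B : ℝ) (pm pp : A → ℂ),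
        0 ≤ B →
        (∀ (x x' : X) (t t' : ℝ), πA x = πA x' →
          ‖f x t - f x' t'‖ ≤ B * omegaMod x t x' t' ^ γ) →
        (∀ x : X, Tendsto (fun t => f x t) atBot (nhds (pm (πA x)))) →
        (∀ x : X, Tendsto (fun t => f x t) atTop (nhds (pp (πA x)))) →
        (∀ (x : X) (t : ℝ),
          Real.exp (γ * |t|) *
              ‖f x t - pm (πA x) * (psi t : ℂ) - pp (πA x) * (1 - (psi t : ℂ))‖
            ≤ C * B) ∧
        ∀ (x x' : X) (t : ℝ), πA x = πA x' →
          Real.exp (γ * |t|) *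
              ‖(f x t - pm (πA x) * (psi t : ℂ) - pp (πA x) * (1 - (psi t : ℂ)))
                - (f x' t - pm (πA x') * (psi t : ℂ) - pp (πA x') * (1 - (psi t : ℂ)))‖
            ≤ C * B * dist x x' ^ γ := by
  refine ⟨3, by norm_num, fun f B pm pp hB hf hbot htop => ⟨fun x t => ?_, fun x x' t hx => ?_⟩⟩
  · exact exp_mul_norm_sub_interp_le x hγ hB (fun t t' => hf x x t t' rfl) (hbot x) (htop x) t
  · have hfib := hf x x' t t hx
    rw [omegaMod_same_time, mul_rpow (exp_pos _).le dist_nonneg, ← exp_mul] at hfib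
    rw [hx, sub_sub_sub_cancel_right, sub_sub_sub_cancel_right]
    have hd : 0 ≤ B * dist x x' ^ γ := mul_nonneg hB (rpow_nonneg dist_nonneg γ)
    calc exp (γ * |t|) * ‖f x t - f x' t‖
        ≤ exp (γ * |t|) * (B * (exp (-|t| * γ) * dist x x' ^ γ)) := by gcongr
      _ = B * dist x x' ^ γ := by rw [neg_mul, exp_neg, mul_comm |t|]; field_simp
      _ ≤ 3 * B * dist x x' ^ γ := by linarith

/-- For `γ ∈ (0,1]` there is a constant `C` (depending only on `γ`) such that for every
`f ∈ C^{0,γ}_ω(X × ℝ)` with fiberwise limits `p⁻(f)` at `-∞` and `p⁺(f)` at `+∞`, the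
function `φ(x,t) = f(x,t) - p⁻(f)(x)ψ(t) - p⁺(f)(x)(1 - ψ(t))` satisfies
`sup e^{γ|t|}|φ(x,t)| ≤ C ‖f‖_{γ,ω}` and, for `x, x'` in the same fiber,
`e^{γ|t|}|φ(x,t) - φ(x',t)| ≤ C ‖f‖_{γ,ω} d(x,x')^γ`. -/
theorem stmt18 {X : Type*} [MetricSpace X] {A : Type*} [Fintype A] (πA : X → A)
    (γ : ℝ) (hγ : γ ∈ Set.Ioc (0 : ℝ) 1) :
    ∃ C : ℝ, 0 < C ∧
      ∀ (f : X → ℝ → ℂ) (B : ℝ) (pm pp : A → ℂ),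
        0 ≤ B →
        (∀ (x x' : X) (t t' : ℝ), πA x = πA x' →
          ‖f x t - f x' t'‖ ≤ B * omegaMod x t x' t' ^ γ) →
        (∀ x : X, Tendsto (fun t => f x t) atBot (nhds (pm (πA x)))) →
        (∀ x : X, Tendsto (fun t => f x t) atTop (nhds (pp (πA x)))) →
        (∀ (x : X) (t : ℝ),
          Real.exp (γ * |t|) *
              ‖f x t - pm (πA x) * (psi t : ℂ) - pp (πA x) * (1 - (psi t : ℂ))‖
            ≤ C * B) ∧
        ∀ (x x' : X) (t : ℝ), πA x = πA x' →
          Real.exp (γ * |t|) *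
              ‖(f x t - pm (πA x) * (psi t : ℂ) - pp (πA x) * (1 - (psi t : ℂ)))
                - (f x' t - pm (πA x') * (psi t : ℂ) - pp (πA x') * (1 - (psi t : ℂ)))‖
            ≤ C * B * dist x x' ^ γ :=
  stmt18_general πA γ hγ
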